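/- Let θ > 0 and β ≠ 0 be real numbers. Suppose η : ℝ × ℝ → ℝ is twice continuously differentiable and satisfies the free backward heat equation ∂η/∂t (t,q) = -(θ²/2) ∂²η/∂q² (t,q) for all (t,q) ∈ ℝ × ℝ. Define η^V(t,q) = η( (e^{2βt} - 1)/(2β) , e^{βt} q ). Then η^V satisfies the backward heat equation with drift term D(q) = βq, namely ∂η^V/∂t (t,q) = -(θ²/2) ∂²η^V/∂q² (t,q) + β q · ∂η^V/∂q (t,q) for all (t,q) ∈ ℝ × ℝ. -/

import Mathlib

/-!
Write `η^V(t,q) = η(φ(t), ψ(t) q)` with `ψ(t) = e^{βt}` and `φ(t) = (e^{2βt} - 1)/(2β)`, so that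
`φ' = ψ²` and `ψ' = βψ`. The chain rule gives `η^V_q = ψ η_q`, `η^V_qq = ψ² η_qq` and
`η^V_t = ψ² η_t + βψq η_q`; the free equation turns `ψ² η_t` into `-(θ²/2) η^V_qq`, and
`βψq η_q = βq η^V_q` is the drift term.
-/

open Real

noncomputable def partialT (f : ℝ × ℝ → ℝ) (t q : ℝ) : ℝ :=
  deriv (fun s => f (s, q)) t

noncomputable def partialQ (f : ℝ × ℝ → ℝ) (t q : ℝ) : ℝ :=
  deriv (fun r => f (t, r)) q

noncomputable def partialQQ (f : ℝ × ℝ → ℝ) (t q : ℝ) : ℝ :=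
  deriv (fun r => partialQ f t r) q

section PartialDerivatives

variable {f g : ℝ × ℝ → ℝ}

lemma partialT_eq_fderiv {t q : ℝ} (hf : DifferentiableAt ℝ f (t, q)) :
    partialT f t q = fderiv ℝ f (t, q) (1, 0) :=
  (hf.hasFDerivAt.comp_hasDerivAt t ((hasDerivAt_id t).prodMk (hasDerivAt_const t q))).deriv

lemma partialQ_eq_fderiv {t q : ℝ} (hf : DifferentiableAt ℝ f (t, q)) :
    partialQ f t q = fderiv ℝ f (t, q) (0, 1) :=
  (hf.hasFDerivAt.comp_hasDerivAt q ((hasDerivAt_const q t).prodMk (hasDerivAt_id q))).deriv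

lemma HasDerivAt.comp_partial {γ₁ γ₂ : ℝ → ℝ} {a b s : ℝ}
    (hf : DifferentiableAt ℝ f (γ₁ s, γ₂ s)) (h₁ : HasDerivAt γ₁ a s) (h₂ : HasDerivAt γ₂ b s) :
    HasDerivAt (fun s => f (γ₁ s, γ₂ s))
      (a * partialT f (γ₁ s) (γ₂ s) + b * partialQ f (γ₁ s) (γ₂ s)) s := by
  refine (hf.hasFDerivAt.comp_hasDerivAt s (h₁.prodMk h₂)).congr_deriv ?_
  have hab : ((a, b) : ℝ × ℝ) = a • ((1 : ℝ), (0 : ℝ)) + b • ((0 : ℝ), (1 : ℝ)) := by simp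
  rw [partialT_eq_fderiv hf, partialQ_eq_fderiv hf, hab, map_add, map_smul, map_smul,
    smul_eq_mul, smul_eq_mul]

lemma partialQ_of_eq_comp_mul {a c t : ℝ} (h : ∀ r, g (t, r) = f (a, c * r)) (q : ℝ) :
    partialQ g t q = c * partialQ f a (c * q) := by
  simp only [partialQ, h]
  exact deriv_comp_mul_left c (fun r => f (a, r)) q

lemma partialQQ_of_eq_comp_mul {a c t : ℝ} (h : ∀ r, g (t, r) = f (a, c * r)) (q : ℝ) :
    partialQQ g t q = c * c * partialQQ f a (c * q) := by
  simp only [partialQQ, partialQ_of_eq_comp_mul h, deriv_const_mul_field', mul_assoc]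
  exact congrArg (c * ·) (deriv_comp_mul_left c (fun r => partialQ f a r) q)

end PartialDerivatives

lemma hasDerivAt_exp_mul_sub_one_div {k : ℝ} (hk : k ≠ 0) (t : ℝ) :
    HasDerivAt (fun s => (exp (k * s) - 1) / k) (exp (k * t)) t := by
  refine ((((hasDerivAt_id t).const_mul k).exp.sub_const 1).div_const k).congr_deriv ?_
  simp [hk]

theorem heat_with_drift_general (θ β : ℝ) (hβ : β ≠ 0) (η : ℝ × ℝ → ℝ)
    (hη : ContDiff ℝ 2 η)
    (hfree : ∀ t q : ℝ, partialT η t q = -(θ ^ 2 / 2) * partialQQ η t q)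
    (ηV : ℝ × ℝ → ℝ)
    (hηV : ∀ t q : ℝ,
      ηV (t, q) = η ((Real.exp (2 * β * t) - 1) / (2 * β), Real.exp (β * t) * q)) :
    ∀ t q : ℝ,
      partialT ηV t q = -(θ ^ 2 / 2) * partialQQ ηV t q + β * q * partialQ ηV t q := by
  intro t q
  have hφ := hasDerivAt_exp_mul_sub_one_div (mul_ne_zero two_ne_zero hβ) t
  have hψ : HasDerivAt (fun s => exp (β * s) * q) (exp (β * t) * β * q) t :=
    (((hasDerivAt_id t).const_mul β).exp.mul_const q).congr_deriv (by simp)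
  set φ := (exp (2 * β * t) - 1) / (2 * β)
  have hT : partialT ηV t q = exp (2 * β * t) * partialT η φ (exp (β * t) * q)
      + exp (β * t) * β * q * partialQ η φ (exp (β * t) * q) := by
    rw [partialT, funext (hηV · q)]
    exact (hφ.comp_partial ((hη.differentiable two_ne_zero) _) hψ).deriv
  have hslice : ∀ r, ηV (t, r) = η (φ, exp (β * t) * r) := hηV t
  have hsq : exp (2 * β * t) = exp (β * t) * exp (β * t) := by rw [← exp_add]; ring_nf
  rw [hT, partialQQ_of_eq_comp_mul hslice, partialQ_of_eq_comp_mul hslice, hfree, hsq]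
  ring

/-- from a `C²` solution `η` of the free backward heat equation
`η_t = -(θ²/2) η_qq`, the function `η^V(t,q) = η((e^{2βt}-1)/(2β), e^{βt} q)` solves
the backward heat equation with drift term `D(q) = βq`:
`η^V_t = -(θ²/2) η^V_qq + βq η^V_q`. -/
theorem heat_with_drift (θ β : ℝ) (hθ : 0 < θ) (hβ : β ≠ 0) (η : ℝ × ℝ → ℝ)
    (hη : ContDiff ℝ 2 η)
    (hfree : ∀ t q : ℝ, partialT η t q = -(θ ^ 2 / 2) * partialQQ η t q)
    (ηV : ℝ × ℝ → ℝ)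
    (hηV : ∀ t q : ℝ,
      ηV (t, q) = η ((Real.exp (2 * β * t) - 1) / (2 * β), Real.exp (β * t) * q)) :
    ∀ t q : ℝ,
      partialT ηV t q = -(θ ^ 2 / 2) * partialQQ ηV t q + β * q * partialQ ηV t q :=
  heat_with_drift_general θ β hβ η hη hfree ηV hηV
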